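/- ctype is defined on heads producing Δ-abstractions under hereditary substitution: if Γ, x:T, Γ' ⊢ t₁ t₂ : T', Γ ⊢ t : T, the hereditary substitution [t/x]^T t₁ equals Δy:¬(T''→T').t' for some y, T'', t', and t₁ is not a Δ-abstraction, then there exists a type A such that ctype_T(x, t₁) = A. -/

import Mathlib

/-- Types of the λΔ-calculus: ⊥, a base type b, and arrow types. -/
inductive Ty : Type
  | bot : Ty
  | base : Ty
  | arr : Ty → Ty → Ty
deriving DecidableEq

/-- Negation ¬A is defined as A → ⊥. -/
def Ty.neg (A : Ty) : Ty := Ty.arr A Ty.bot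

/-- Terms of the λΔ-calculus (named variables). -/
inductive Tm : Type
  | var : ℕ → Tm
  | lam : ℕ → Ty → Tm → Tm
  | delta : ℕ → Ty → Tm → Tm
  | app : Tm → Tm → Tm
deriving DecidableEq

/-- Free variables of a term. -/
def Tm.fv : Tm → Finset ℕ
  | .var x => {x}
  | .lam x _ t => t.fv \ {x}
  | .delta x _ t => t.fv \ {x}
  | .app t1 t2 => t1.fv ∪ t2.fv

/-- Capture-avoiding substitution [t/x]t' (variables are assumed suitably renamed). -/
def Tm.subst (t : Tm) (x : ℕ) : Tm → Tm
  | .var y => if y = x then t else .var y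
  | .lam y A s => if y = x then .lam y A s else .lam y A (Tm.subst t x s)
  | .delta y A s => if y = x then .delta y A s else .delta y A (Tm.subst t x s)
  | .app s1 s2 => .app (Tm.subst t x s1) (Tm.subst t x s2)

def Tm.isLam : Tm → Bool
  | .lam _ _ _ => true
  | _ => false

def Tm.isDelta : Tm → Bool
  | .delta _ _ _ => true
  | _ => false

/-- The head of a term (head(x) = x, head(t₁ t₂) = head(t₁)). -/
def Tm.headVar : Tm → Option ℕ
  | .var x => some x
  | .app t _ => t.headVar
  | _ => none

/-- Typing contexts: lists of (variable, type) pairs; Γ, x:A is cons. -/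
abbrev Ctx := List (ℕ × Ty)

/-- The typing relation of the λΔ-calculus. -/
inductive Typing : Ctx → Tm → Ty → Prop
  | ax {Γ x T} : (x, T) ∈ Γ → Typing Γ (.var x) T
  | lam {Γ x A B t} : Typing ((x, A) :: Γ) t B → Typing Γ (.lam x A t) (.arr A B)
  | app {Γ t1 t2 A B} : Typing Γ t1 (.arr A B) → Typing Γ t2 A → Typing Γ (.app t1 t2) B
  | delta {Γ x T t} : Typing ((x, Ty.neg T) :: Γ) t .bot → Typing Γ (.delta x (Ty.neg T) t) T

/-- One-step reduction: compatible closure of β-reduction and the structural rule. -/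
inductive Step : Tm → Tm → Prop
  | beta {x A t t'} : Step (.app (.lam x A t) t') (Tm.subst t' x t)
  | structRed {x A B t t' y z} :
      z ∉ t.fv → z ∉ t'.fv → y ∉ t'.fv → y ≠ z →
      Step (.app (.delta x (Ty.neg (.arr A B)) t) t')
        (.delta z (Ty.neg B)
          (Tm.subst (.lam y (.arr A B) (.app (.var z) (.app (.var y) t'))) x t))
  | appL {t1 t1' t2} : Step t1 t1' → Step (.app t1 t2) (.app t1' t2)
  | appR {t1 t2 t2'} : Step t2 t2' → Step (.app t1 t2) (.app t1 t2')
  | lamBody {x A t t'} : Step t t' → Step (.lam x A t) (.lam x A t')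
  | deltaBody {x A t t'} : Step t t' → Step (.delta x A t) (.delta x A t')

/-- Multi-step reduction. -/
abbrev Steps : Tm → Tm → Prop := Relation.ReflTransGen Step

mutual
/-- IsNormal forms: n ::= x | λx:T.n | Δx:T.n | h n. -/
inductive IsNormal : Tm → Prop
  | var {x} : IsNormal (.var x)
  | lam {x A t} : IsNormal t → IsNormal (.lam x A t)
  | delta {x A t} : IsNormal t → IsNormal (.delta x A t)
  | app {h n} : IsHead h → IsNormal n → IsNormal (.app h n)
/-- Heads: h ::= x | h n. -/
inductive IsHead : Tm → Prop
  | var {x} : IsHead (.var x)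
  | app {h n} : IsHead h → IsNormal n → IsHead (.app h n)
end

/-- Immediate subexpression on types: A < A → B and B < A → B. -/
inductive TySub : Ty → Ty → Prop
  | left {A B} : TySub A (.arr A B)
  | right {A B} : TySub B (.arr A B)

/-- The strict subexpression ordering on types. -/
abbrev TyLt : Ty → Ty → Prop := Relation.TransGen TySub

/-- The partial function ctype, as a relation: ctype_T(x, t) = T'. -/
inductive Ctype (T : Ty) (x : ℕ) : Tm → Ty → Prop
  | var : Ctype T x (.var x) T
  | app {t1 t2 T' T''} : Ctype T x t1 (.arr T' T'') → Ctype T x (.app t1 t2) T''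

/-- Multi-substitutions Θ: lists of triples (y, z, t). -/
abbrev MSub := List (ℕ × ℕ × Tm)

mutual
/-- The hereditary structural substitution function ⟨Θ⟩^{A1}_{A2} t' = s, as a relation. -/
inductive SSubst : MSub → Ty → Ty → Tm → Tm → Prop
  | varHit {Θ A1 A2 x z a y} : (x, z, a) ∈ Θ → y ≠ x → y ≠ z → y ∉ a.fv →
      SSubst Θ A1 A2 (.var x) (.lam y (.arr A1 A2) (.app (.var z) (.app (.var y) a)))
  | varMiss {Θ A1 A2 x} : (∀ z a, (x, z, a) ∉ Θ) → SSubst Θ A1 A2 (.var x) (.var x)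
  | lam {Θ A1 A2 y A t s} : SSubst Θ A1 A2 t s → SSubst Θ A1 A2 (.lam y A t) (.lam y A s)
  | delta {Θ A1 A2 y A t s} : SSubst Θ A1 A2 t s → SSubst Θ A1 A2 (.delta y A t) (.delta y A s)
  | appLam {Θ A1 A2 x z a y t'' s s'} : (x, z, a) ∈ Θ →
      SSubst Θ A1 A2 t'' s → HSubst A1 a y s s' →
      SSubst Θ A1 A2 (.app (.var x) (.lam y A1 t'')) (.app (.var z) s')
  | appDelta {Θ A1 A2 x z a y t'' s z2} : (x, z, a) ∈ Θ →
      SSubst ((y, z2, a) :: Θ) A1 A2 t'' s →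
      SSubst Θ A1 A2 (.app (.var x) (.delta y (Ty.neg (.arr A1 A2)) t''))
        (.app (.var z) (.delta z2 (Ty.neg A2) s))
  | appOther {Θ A1 A2 x z a t' s'} : (x, z, a) ∈ Θ →
      t'.isLam = false → t'.isDelta = false →
      SSubst Θ A1 A2 t' s' → SSubst Θ A1 A2 (.app (.var x) t') (.app (.var z) s')
  | appMiss {Θ A1 A2 t1 t2 s1 s2} :
      (∀ x, t1 = Tm.var x → ∀ z a, (x, z, a) ∉ Θ) →
      SSubst Θ A1 A2 t1 s1 → SSubst Θ A1 A2 t2 s2 →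
      SSubst Θ A1 A2 (.app t1 t2) (.app s1 s2)
/-- The hereditary substitution function [t/x]^A t' = s, as a relation. -/
inductive HSubst : Ty → Tm → ℕ → Tm → Tm → Prop
  | varEq {A t x} : HSubst A t x (.var x) t
  | varNe {A t x y} : y ≠ x → HSubst A t x (.var y) (.var y)
  | lam {A t x y B t' s} : HSubst A t x t' s → HSubst A t x (.lam y B t') (.lam y B s)
  | delta {A t x y B t' s} : HSubst A t x t' s → HSubst A t x (.delta y B t') (.delta y B s)
  | app {A t x t1 t2 s1 s2} : HSubst A t x t1 s1 → HSubst A t x t2 s2 →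
      ((s1.isLam = false ∧ s1.isDelta = false) ∨
       (t1.isLam = true ∨ t1.isDelta = true)) →
      HSubst A t x (.app t1 t2) (.app s1 s2)
  | appBeta {A t x t1 t2 y A'' A' s1 s2 s} :
      HSubst A t x t1 (.lam y A'' s1) → HSubst A t x t2 s2 →
      Ctype A x t1 (.arr A'' A') → HSubst A'' s2 y s1 s →
      HSubst A t x (.app t1 t2) s
  | appDelta {A t x t1 t2 y A'' A' s0 s2 z s'} :
      HSubst A t x t1 (.delta y (Ty.neg (.arr A'' A')) s0) → HSubst A t x t2 s2 →
      Ctype A x t1 (.arr A'' A') →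
      z ∉ s0.fv → z ∉ s2.fv →
      SSubst [(y, z, s2)] A'' A' s0 s' →
      HSubst A t x (.app t1 t2) (.delta z (Ty.neg A') s')
end

/-- ctype is defined on heads producing Δ-abstractions under hereditary substitution. -/
theorem ctype_defined_of_hsub_delta {Γ Γ' : Ctx} {x y : ℕ} {T T' T'' : Ty} {t t1 t2 t' : Tm}
    (h1 : Typing (Γ' ++ (x, T) :: Γ) (.app t1 t2) T')
    (h2 : Typing Γ t T)
    (h3 : HSubst T t x t1 (.delta y (Ty.neg (.arr T'' T')) t'))
    (h4 : t1.isDelta = false) :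
    ∃ A, Ctype T x t1 A := by
  -- `varNe`, `lam` and `app` cannot output a Δ-abstraction; the two redex rules record the ctype of `t1`.
  cases h3 with
  | varEq => exact ⟨T, .var⟩
  | delta => cases h4
  | appBeta _ _ hc => exact ⟨_, .app hc⟩
  | appDelta _ _ hc => exact ⟨_, .app hc⟩
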